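/- Suppose 1 < p < q, let E be a Banach space and T : U^q → E a bounded linear operator with operator norm at most C_q, and suppose additionally there exists C_p ∈ (0,C_q] with ‖Tu‖_E ≤ C_p ‖u‖_{U^p} for all u ∈ U^p. Then for every u ∈ V^p_{rc}, ‖Tu‖_E ≤ C_{p,q} C_p (log(C_q/C_p) + 1) ‖u‖_{V^p}, where C_{p,q} depends only on p and q. -/

import Mathlib

noncomputable section

open MeasureTheory Complex Set Filter
open scoped ENNReal NNReal ComplexConjugate FourierTransform RealInnerProductSpace

/-- The plane `ℝ²`. -/
abbrev E2 : Type := EuclideanSpace ℝ (Fin 2)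

/-- The Hilbert space `L²(ℝ²; ℂ)`. -/
abbrev H2 : Type := MeasureTheory.Lp (α := E2) ℂ 2 volume

/-- `T` is the (bounded) Fourier multiplier on `L²(ℝ²)` with symbol `m`:
on Schwartz functions it acts by multiplying the Fourier transform by `m`
and inverting the Fourier integral. -/
def IsFourierMultiplier (m : E2 → ℂ) (T : H2 →L[ℂ] H2) : Prop :=
  ∀ (u : SchwartzMap E2 ℂ) (hu : MemLp (⇑u) 2 (volume : Measure E2)),
    ⇑(T (hu.toLp ⇑u)) =ᵐ[volume]
      (FourierTransformInv.fourierInv fun ξ => m ξ * FourierTransform.fourier (⇑u) ξ)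

/-- An arbitrary function `g : ℝ² → ℂ` promoted to an element of `L²`, with junk value `0`
if `g ∉ L²`. -/
def toL2 (g : E2 → ℂ) : H2 :=
  haveI := Classical.dec (MemLp g 2 (volume : Measure E2))
  if hg : MemLp g 2 (volume : Measure E2) then hg.toLp g else 0

/-- The fixed smooth cutoff `χ`, equal to `1` on `|r| ≤ 1/2` and to `0` on `|r| ≥ 3/4`,
with values in `[0,1]`. -/
def IsCutoff (χ : ℝ → ℝ) : Prop :=
  ContDiff ℝ (⊤ : ℕ∞) χ ∧ (∀ r, χ r ∈ Set.Icc (0:ℝ) 1) ∧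
    (∀ r, |r| ≤ 1/2 → χ r = 1) ∧ (∀ r, 3/4 ≤ |r| → χ r = 0)

/-- Symbol of the projection `P_{≤k}`: `χ(2^{-k}(|ξ|-1))`. -/
def pleSymb (χ : ℝ → ℝ) (k : ℤ) : E2 → ℂ :=
  fun ξ => ((χ ((2:ℝ) ^ (-k) * (‖ξ‖ - 1)) : ℝ) : ℂ)

/-- Symbol of the projection `P_k = P_{≤k} - P_{≤k-1}` for `k < 0`, and
`P_0 = 1 - P_{<0}` for `k = 0`. -/
def pkSymb (χ : ℝ → ℝ) (k : ℤ) : E2 → ℂ :=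
  if k = 0 then fun ξ => 1 - pleSymb χ (-1) ξ
  else fun ξ => pleSymb χ k ξ - pleSymb χ (k - 1) ξ

/-- Symbol of the projection `P_{k₁ ≤ · ≤ k₂} = P_{≤k₂} - P_{≤k₁-1}`. -/
def pbandSymb (χ : ℝ → ℝ) (k1 k2 : ℤ) : E2 → ℂ :=
  fun ξ => pleSymb χ k2 ξ - pleSymb χ (k1 - 1) ξ

/-- Assumptions on the radial profile `γ` of the dispersion relation:
`δ ∈ (0,1)`, `β` a positive integer, `γ` smooth on `(1-δ, 1+δ)` with
`|γ'(r)| ≈ 1` and `|γ''(r)| ≈ |r-1|^β` there. -/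
def GammaAssumptions (δ : ℝ) (γ : ℝ → ℝ) (β : ℕ) : Prop :=
  0 < δ ∧ δ < 1 ∧ 0 < β ∧ ContDiffOn ℝ (⊤ : ℕ∞) γ (Set.Ioo (1-δ) (1+δ)) ∧
  (∃ c C : ℝ, 0 < c ∧ ∀ r ∈ Set.Ioo (1-δ) (1+δ),
      c ≤ |deriv γ r| ∧ |deriv γ r| ≤ C) ∧
  (∃ c C : ℝ, 0 < c ∧ ∀ r ∈ Set.Ioo (1-δ) (1+δ),
      c * |r-1| ^ β ≤ |deriv (deriv γ) r| ∧ |deriv (deriv γ) r| ≤ C * |r-1| ^ β)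

/-- `h(ξ) = γ(|ξ|)` on the annulus `|ξ| ∈ (1-δ, 1+δ)`. -/
def IsRadialH (δ : ℝ) (γ : ℝ → ℝ) (h : E2 → ℝ) : Prop :=
  ∀ ξ : E2, ‖ξ‖ ∈ Set.Ioo (1-δ) (1+δ) → h ξ = γ ‖ξ‖

/-- `W t` is the Fourier multiplier `e^{ith(D)}` with symbol `e^{ith(ξ)}`. -/
def IsPropagator (h : E2 → ℝ) (W : ℝ → H2 →L[ℂ] H2) : Prop :=
  ∀ t : ℝ, IsFourierMultiplier (fun ξ => Complex.exp (Complex.I * (t : ℂ) * (h ξ : ℂ))) (W t)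

/-- The frequency truncation parameter `M`: `M < -100` and `2^{M+4} < δ`. -/
def MHyp (δ : ℝ) (M : ℤ) : Prop := M < -100 ∧ (2:ℝ) ^ (M + 4) < δ

/-- The null structure symbol `A`: `|A(ξ)| ≲ ||ξ|-1|^{β/2}`, supported in
`1 - 2^{M-1} < |ξ| < 1 + 2^{M-1}`. -/
def ASymbol (β : ℕ) (M : ℤ) (A : E2 → ℂ) : Prop :=
  (∃ C : ℝ, ∀ ξ : E2, ‖A ξ‖ ≤ C * |‖ξ‖ - 1| ^ ((β : ℝ)/2)) ∧
  ∀ ξ : E2, A ξ ≠ 0 → 1 - (2:ℝ) ^ (M - 1) < ‖ξ‖ ∧ ‖ξ‖ < 1 + (2:ℝ) ^ (M - 1)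

/-- The family of projections `P_k` (`P_0` being special). -/
def IsPk (χ : ℝ → ℝ) (P : ℤ → H2 →L[ℂ] H2) : Prop :=
  ∀ k : ℤ, IsFourierMultiplier (pkSymb χ k) (P k)

/-- The family of projections `P_{≤ k}`. -/
def IsPle (χ : ℝ → ℝ) (Ple : ℤ → H2 →L[ℂ] H2) : Prop :=
  ∀ k : ℤ, IsFourierMultiplier (pleSymb χ k) (Ple k)

/-- The family of projections `P_{k₁ ≤ · ≤ k₂}`. -/
def IsPband (χ : ℝ → ℝ) (Pb : ℤ → ℤ → H2 →L[ℂ] H2) : Prop :=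
  ∀ k1 k2 : ℤ, IsFourierMultiplier (pbandSymb χ k1 k2) (Pb k1 k2)

/-- A `U^p`-atom: a step function `a = Σ_{i<K} 1_{[t_i, t_{i+1})} φ_i` (with `t_K = ∞`),
where `Σ ‖φ_i‖^p = 1`. -/
def IsUpAtom (p : ℝ) (a : ℝ → H2) : Prop :=
  ∃ (K : ℕ) (t : ℕ → ℝ) (φ : ℕ → H2), 0 < K ∧ StrictMono t ∧
    (∑ i ∈ Finset.range K, ‖φ i‖ ^ p) = 1 ∧
    ∀ s : ℝ, a s = ∑ i ∈ Finset.range K,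
      if t i ≤ s ∧ (i + 1 = K ∨ s < t (i + 1)) then φ i else 0

/-- The atomic `U^p` norm (with value `∞` when no atomic decomposition exists). -/
def uNorm (p : ℝ) (u : ℝ → H2) : ℝ≥0∞ :=
  ⨅ (c : ℕ → ℂ) (a : ℕ → ℝ → H2)
    (_ : ∀ j, IsUpAtom p (a j)) (_ : Summable fun j => ‖c j‖)
    (_ : ∀ s : ℝ, HasSum (fun j => c j • a j s) (u s)),
    ENNReal.ofReal (∑' j, ‖c j‖)

/-- The `V^p` norm: supremum over finite partitions `t_0 < ⋯ < t_K < t_{K+1} = ∞`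
of the `ℓ^p` sum of the increments (with the convention `v(∞) = 0`). -/
def vNorm (p : ℝ) (v : ℝ → H2) : ℝ≥0∞ :=
  ⨆ (K : ℕ) (t : ℕ → ℝ) (_ : StrictMono t),
    (ENNReal.ofReal ((∑ i ∈ Finset.range K, ‖v (t (i+1)) - v (t i)‖ ^ p) + ‖v (t K)‖ ^ p))
      ^ (1/p)

/-- Right continuity (everywhere). -/
def RightCont (v : ℝ → H2) : Prop := ∀ s : ℝ, ContinuousWithinAt v (Set.Ici s) s

/-- Membership in `V^p_{rc}`: finite `V^p` norm, right continuity, and vanishing limit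
at `-∞`. -/
def InVprc (p : ℝ) (v : ℝ → H2) : Prop :=
  vNorm p v < ⊤ ∧ RightCont v ∧ Tendsto v atBot (nhds 0)

/-- Conjugation by the free flow: `u(t) ↦ e^{-ith(D)} u(t)`. -/
def twist (W : ℝ → H2 →L[ℂ] H2) (u : ℝ → H2) : ℝ → H2 := fun t => W (-t) (u t)

/-- The `X^0` norm: `(Σ_{k ≤ 0} ‖P_k u‖_{U²_{h(D)}}²)^{1/2}`. -/
def xNorm (W : ℝ → H2 →L[ℂ] H2) (P : ℤ → H2 →L[ℂ] H2) (u : ℝ → H2) : ℝ≥0∞ :=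
  (∑' k : {k : ℤ // k ≤ 0}, uNorm 2 (twist W fun t => P k.1 (u t)) ^ (2:ℝ)) ^ (1/2 : ℝ)

/-- The `Y^0` norm: `(Σ_{k ≤ 0} ‖P_k v‖_{V²_{h(D)}}²)^{1/2}`. -/
def yNorm (W : ℝ → H2 →L[ℂ] H2) (P : ℤ → H2 →L[ℂ] H2) (v : ℝ → H2) : ℝ≥0∞ :=
  (∑' k : {k : ℤ // k ≤ 0}, vNorm 2 (twist W fun t => P k.1 (v t)) ^ (2:ℝ)) ^ (1/2 : ℝ)

/-- Membership in `Y^0`: finite `Y^0` norm with each `P_k v ∈ V²_{h(D),rc}`. -/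
def InY0 (W : ℝ → H2 →L[ℂ] H2) (P : ℤ → H2 →L[ℂ] H2) (v : ℝ → H2) : Prop :=
  yNorm W P v < ⊤ ∧ ∀ k : ℤ, k ≤ 0 →
    RightCont (twist W fun t => P k (v t)) ∧
      Tendsto (twist W fun t => P k (v t)) atBot (nhds 0)

/-- The time interval `[0, T)` for `T ∈ [0,∞]`. -/
def TSet (T : ℝ≥0∞) : Set ℝ := {t : ℝ | 0 ≤ t ∧ ENNReal.ofReal t < T}

/-- The Duhamel operator `I_T(f)(t) = ∫_0^t 1_{[0,T)}(s) e^{i(t-s)h(D)} f(s) ds`. -/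
def IT (W : ℝ → H2 →L[ℂ] H2) (T : ℝ≥0∞) (f : ℝ → H2) : ℝ → H2 :=
  fun t => ∫ s in (0:ℝ)..t,
    (if 0 ≤ s ∧ ENNReal.ofReal s < T then (1:ℝ) else 0) • W (t - s) (f s)

/-- The pointwise cubic expression `P_{≤M}u₁ ⋅ conj(P_{≤M}u₂) ⋅ P_{≤M}u₃`. -/
def cubicFun (PM : H2 →L[ℂ] H2) (v1 v2 v3 : H2) : E2 → ℂ :=
  fun x => (PM v1 : E2 → ℂ) x * (starRingEnd ℂ) ((PM v2 : E2 → ℂ) x) * (PM v3 : E2 → ℂ) x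

/-- The nonlinearity `A(D)(|P_{≤M}u|² P_{≤M}u)`. -/
def NLmap (AD PM : H2 →L[ℂ] H2) (v : H2) : H2 := AD (toL2 (cubicFun PM v v v))

/-- `u` is a strong solution on `S` of `∂_t u - ih(D)u = A(D)(|P_{≤M}u|²P_{≤M}u)`,
`u(0) = u0`, in the Duhamel integral form. -/
def IsDuhamelSolOn (W : ℝ → H2 →L[ℂ] H2) (AD PM : H2 →L[ℂ] H2) (u0 : H2)
    (u : ℝ → H2) (S : Set ℝ) : Prop :=
  ContinuousOn u S ∧ ∀ t ∈ S,
    u t = W t u0 + Complex.I • ∫ s in (0:ℝ)..t, W (t - s) (NLmap AD PM (u s))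

/-- Zero extension of a function on `[0,∞)` to the real line. -/
def ext0 (u : ℝ → H2) : ℝ → H2 := fun t => if 0 ≤ t then u t else 0

/-- Complex conjugation on `L²(ℝ²)`. -/
def conjL2 (f : H2) : H2 := toL2 fun x => (starRingEnd ℂ) ((f : E2 → ℂ) x)

/-- The kernel `K(t,x) = (2π)^{-2} ∫ e^{i(x·ξ + t h(ξ))} χ_k²(ξ) dξ`, where
`χ_k = P_{k-2 ≤ · ≤ k+2}`. -/
def Kker (h : E2 → ℝ) (χ : ℝ → ℝ) (k : ℤ) (t : ℝ) (x : E2) : ℂ :=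
  ((2 * Real.pi) ^ 2 : ℝ)⁻¹ •
    ∫ ξ : E2, Complex.exp (Complex.I * (((inner ℝ x ξ : ℝ) + t * h ξ : ℝ) : ℂ)) *
      (pbandSymb χ (k - 2) (k + 2) ξ) ^ 2

/-- The point `r e^{iθ}` of the plane, in polar coordinates. -/
def polarPt (r θ : ℝ) : E2 := (WithLp.equiv 2 (Fin 2 → ℝ)).symm ![r * Real.cos θ, r * Real.sin θ]

/-- The (distributional) Fourier transform of `u ∈ L²` is supported in `S`:
the `L²` pairing of `u` with `𝓕 g` vanishes for every Schwartz function `g`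
vanishing on `S` (multiplication formula). -/
def HasFourierSupportIn (u : H2) (S : Set E2) : Prop :=
  ∀ g : SchwartzMap E2 ℂ, (∀ ξ ∈ S, g ξ = 0) →
    ∫ x : E2, (u : E2 → ℂ) x * FourierTransform.fourier (⇑g) x = 0

/-- The separation assumption on `γ''` used for the bilinear estimates: if
`k₁ ≤ k₂ - 10` then `|γ''(r₁)| ≤ |γ''(r₂)|/3` whenever `|r₁-1| ≤ 2^{k₁+2}` and
`2^{k₂-2} ≤ |r₂-1| ≤ 2^{M+3}`. -/
def SepHyp (γ : ℝ → ℝ) (M : ℤ) : Prop :=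
  ∀ k1 k2 : ℤ, k1 ≤ k2 - 10 → ∀ r1 r2 : ℝ,
    |r1 - 1| ≤ (2:ℝ) ^ (k1 + 2) → (2:ℝ) ^ (k2 - 2) ≤ |r2 - 1| →
    |r2 - 1| ≤ (2:ℝ) ^ (M + 3) →
    |deriv (deriv γ) r1| ≤ |deriv (deriv γ) r2| / 3

/-- The annulus `Ω₁ = {1 - 2^{k₁+2} < |ξ| < 1 + 2^{k₁+2}}`. -/
def Omega1 (k1 : ℤ) : Set E2 := {ξ : E2 | 1 - (2:ℝ) ^ (k1 + 2) < ‖ξ‖ ∧ ‖ξ‖ < 1 + (2:ℝ) ^ (k1 + 2)}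

/-- The annulus `Ω₂ = {1 + 2^{k₂-2} < |ξ| < 1 + 2^{k₂+2}}`. -/
def Omega2 (k2 : ℤ) : Set E2 := {ξ : E2 | 1 + (2:ℝ) ^ (k2 - 2) < ‖ξ‖ ∧ ‖ξ‖ < 1 + (2:ℝ) ^ (k2 + 2)}


/-! ### Auxiliary machinery for Statement 17 -/

section Interp17Aux

open Metric

/-- There is a unit vector in `H2`. -/
lemma exists_norm_one_H2 : ∃ x : H2, ‖x‖ = 1 := by
  have hb : MeasurableSet (Metric.ball (0:E2) 1) := measurableSet_ball
  have hfin : (volume (Metric.ball (0:E2) 1)) ≠ ⊤ := (MeasureTheory.measure_ball_lt_top).ne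
  set u : H2 := MeasureTheory.indicatorConstLp 2 hb hfin (1:ℂ) with hu
  have h1 : ‖u‖ ≠ 0 := by
    rw [hu, MeasureTheory.norm_indicatorConstLp (by norm_num) (by norm_num)]
    have hpos : 0 < (volume (Metric.ball (0:E2) 1)).toReal := by
      refine ENNReal.toReal_pos ?_ hfin
      exact (Metric.measure_ball_pos volume (0:E2) one_pos).ne'
    have h2 := Real.rpow_pos_of_pos hpos (1 / (2:ℝ≥0∞).toReal)
    simp only [norm_one, one_mul]
    exact h2.ne'
  refine ⟨‖u‖⁻¹ • u, ?_⟩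
  rw [norm_smul, norm_inv, norm_norm, inv_mul_cancel₀ h1]

/-- There is a `U^r` atom, for any `r`. -/
lemma exists_atom (r : ℝ) : ∃ a : ℝ → H2, IsUpAtom r a := by
  obtain ⟨e, he⟩ := exists_norm_one_H2
  refine ⟨fun s => ∑ i ∈ Finset.range 1,
    if (((i:ℕ) : ℝ) ≤ s ∧ (i + 1 = 1 ∨ s < ((i+1 : ℕ) : ℝ))) then e else 0,
    1, fun i => (i : ℝ), fun _ => e, one_pos, ?_, ?_, fun s => rfl⟩
  · exact fun a b hab => Nat.cast_lt.2 hab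
  · simp [he]

/-- `f` is a step function with jumps in the finite set `S` (and `f = 0` to the left of `S`). -/
def stepOn (f : ℝ → H2) (S : Finset ℝ) : Prop :=
  ∀ s : ℝ, f s = if h : (S.filter (· ≤ s)).Nonempty then f ((S.filter (· ≤ s)).max' h) else 0

lemma mem_filter_le {S : Finset ℝ} {x s : ℝ} (hx : x ∈ S) (hxs : x ≤ s) :
    x ∈ S.filter (· ≤ s) := Finset.mem_filter.2 ⟨hx, hxs⟩

lemma le_max'_filter {S : Finset ℝ} {x s : ℝ} (hx : x ∈ S) (hxs : x ≤ s)
    (h : (S.filter (· ≤ s)).Nonempty) : x ≤ (S.filter (· ≤ s)).max' h :=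
  Finset.le_max' _ _ (mem_filter_le hx hxs)

lemma max'_filter_self {S : Finset ℝ} {x : ℝ} (hx : x ∈ S) (h : (S.filter (· ≤ x)).Nonempty) :
    (S.filter (· ≤ x)).max' h = x := by
  apply le_antisymm
  · exact Finset.max'_le _ _ _ (fun y hy => (Finset.mem_filter.1 hy).2)
  · exact le_max'_filter hx le_rfl h

lemma stepOn_mono {f : ℝ → H2} {S T : Finset ℝ} (hf : stepOn f S) (hST : S ⊆ T) :
    stepOn f T := by
  intro s
  by_cases hT : (T.filter (· ≤ s)).Nonempty
  · rw [dif_pos hT]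
    have hxT := Finset.max'_mem _ hT
    have hxmem : (T.filter (· ≤ s)).max' hT ∈ T := (Finset.mem_filter.1 hxT).1
    have hxle : (T.filter (· ≤ s)).max' hT ≤ s := (Finset.mem_filter.1 hxT).2
    by_cases hS : (S.filter (· ≤ s)).Nonempty
    · have hfs := hf s; rw [dif_pos hS] at hfs
      have hmS := Finset.max'_mem _ hS
      have hmmem : (S.filter (· ≤ s)).max' hS ∈ S := (Finset.mem_filter.1 hmS).1
      have hmle : (S.filter (· ≤ s)).max' hS ≤ s := (Finset.mem_filter.1 hmS).2
      have hmx : (S.filter (· ≤ s)).max' hS ≤ (T.filter (· ≤ s)).max' hT :=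
        le_max'_filter (hST hmmem) hmle hT
      have hSx : (S.filter (· ≤ (T.filter (· ≤ s)).max' hT)).Nonempty :=
        ⟨_, mem_filter_le hmmem hmx⟩
      have hmax : (S.filter (· ≤ (T.filter (· ≤ s)).max' hT)).max' hSx
          = (S.filter (· ≤ s)).max' hS := by
        apply le_antisymm
        · apply Finset.max'_le
          intro y hy
          have hy' := Finset.mem_filter.1 hy
          exact le_max'_filter hy'.1 (le_trans hy'.2 hxle) hS
        · exact le_max'_filter hmmem hmx hSx
      have hfx := hf ((T.filter (· ≤ s)).max' hT)
      rw [dif_pos hSx, hmax] at hfx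
      rw [hfs, hfx]
    · have hfs := hf s; rw [dif_neg hS] at hfs
      have hSx : ¬ (S.filter (· ≤ (T.filter (· ≤ s)).max' hT)).Nonempty := by
        rintro ⟨y, hy⟩
        have hy' := Finset.mem_filter.1 hy
        exact hS ⟨y, mem_filter_le hy'.1 (le_trans hy'.2 hxle)⟩
      have hfx := hf ((T.filter (· ≤ s)).max' hT)
      rw [dif_neg hSx] at hfx
      rw [hfs, hfx]
  · rw [dif_neg hT]
    have hS : ¬ (S.filter (· ≤ s)).Nonempty := by
      rintro ⟨y, hy⟩
      have hy' := Finset.mem_filter.1 hy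
      exact hT ⟨y, mem_filter_le (hST hy'.1) hy'.2⟩
    have hfs := hf s; rw [dif_neg hS] at hfs; exact hfs

lemma stepOn_sub {f g : ℝ → H2} {S : Finset ℝ} (hf : stepOn f S) (hg : stepOn g S) :
    stepOn (fun s => f s - g s) S := by
  intro s
  by_cases h : (S.filter (· ≤ s)).Nonempty
  · simp only [dif_pos h]; rw [hf s, hg s]; simp only [dif_pos h]
  · simp only [dif_neg h]; rw [hf s, hg s]; simp only [dif_neg h, sub_zero]

/-- The step-function approximation of `v` built from the finite set `S`. -/
noncomputable def stepApprox (v : ℝ → H2) (S : Finset ℝ) : ℝ → H2 := fun s =>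
  if h : (S.filter (· ≤ s)).Nonempty then v ((S.filter (· ≤ s)).max' h) else 0

lemma stepOn_stepApprox (v : ℝ → H2) (S : Finset ℝ) : stepOn (stepApprox v S) S := by
  intro s
  by_cases h : (S.filter (· ≤ s)).Nonempty
  · rw [dif_pos h]
    have hxS : (S.filter (· ≤ s)).max' h ∈ S := (Finset.mem_filter.1 (Finset.max'_mem _ h)).1
    have hne : (S.filter (· ≤ (S.filter (· ≤ s)).max' h)).Nonempty :=
      ⟨_, mem_filter_le hxS le_rfl⟩
    simp only [stepApprox]
    rw [dif_pos h, dif_pos hne, max'_filter_self hxS hne]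
  · simp only [stepApprox]
    rw [dif_neg h, dif_neg h]

/-- Monotone enumeration of a nonempty finite set of reals, extended to a strictly
monotone sequence on all of `ℕ`. -/
lemma enum_exists (S : Finset ℝ) (hS : S.Nonempty) :
    ∃ t : ℕ → ℝ, StrictMono t ∧ (∀ i, i < S.card → t i ∈ S) ∧
      (∀ x ∈ S, ∃ i, i < S.card ∧ t i = x) := by
  have hK0 : 0 < S.card := Finset.card_pos.2 hS
  set e := S.orderIsoOfFin rfl with he
  refine ⟨fun i => if h : i < S.card then (e ⟨i, h⟩ : ℝ)
    else (e ⟨S.card - 1, by omega⟩ : ℝ) + ((i + 1 - S.card : ℕ) : ℝ), ?_, ?_, ?_⟩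
  · apply strictMono_nat_of_lt_succ
    intro i
    by_cases h1 : i + 1 < S.card
    · have h0 : i < S.card := by omega
      rw [dif_pos h0, dif_pos h1]
      have hfin : (⟨i, h0⟩ : Fin S.card) < ⟨i+1, h1⟩ := by
        simp [Fin.mk_lt_mk]
      exact Subtype.coe_lt_coe.2 (e.lt_iff_lt.2 hfin)
    · by_cases h0 : i < S.card
      · have hieq : i = S.card - 1 := by omega
        rw [dif_pos h0, dif_neg h1]
        have hcast : ((i + 1 + 1 - S.card : ℕ) : ℝ) = 1 := by
          have h2 : i + 1 + 1 - S.card = 1 := by omega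
          rw [h2, Nat.cast_one]
        rw [hcast]
        have heq2 : (⟨i, h0⟩ : Fin S.card) = ⟨S.card - 1, by omega⟩ := by
          simp only [Fin.mk.injEq]; omega
        rw [heq2]
        linarith
      · rw [dif_neg h0, dif_neg h1]
        have hlt2 : ((i + 1 - S.card : ℕ) : ℝ) < ((i + 1 + 1 - S.card : ℕ) : ℝ) := by
          exact_mod_cast Nat.sub_lt_sub_right (by omega) (by omega)
        linarith
  · intro i hi
    dsimp only
    rw [dif_pos hi]
    exact (e ⟨i, hi⟩).2
  · intro x hx
    obtain ⟨i, hi⟩ := e.surjective ⟨x, hx⟩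
    refine ⟨i.1, i.2, ?_⟩
    dsimp only
    rw [dif_pos i.isLt]
    exact congrArg Subtype.val hi

/-- A step function supported on a nonempty finite set `S` has the canonical
atom-like representation. -/
lemma stepOn_rep {f : ℝ → H2} {S : Finset ℝ} (hS : S.Nonempty) (hf : stepOn f S) :
    ∃ t : ℕ → ℝ, StrictMono t ∧ (∀ i, i < S.card → t i ∈ S) ∧
      ∀ s, f s = ∑ i ∈ Finset.range S.card,
        if t i ≤ s ∧ (i + 1 = S.card ∨ s < t (i + 1)) then f (t i) else 0 := by
  obtain ⟨t, hmono, hmem, hsurj⟩ := enum_exists S hS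
  refine ⟨t, hmono, hmem, fun s => ?_⟩
  by_cases h : (S.filter (· ≤ s)).Nonempty
  · have hmS : (S.filter (· ≤ s)).max' h ∈ S := (Finset.mem_filter.1 (Finset.max'_mem _ h)).1
    have hmle : (S.filter (· ≤ s)).max' h ≤ s := (Finset.mem_filter.1 (Finset.max'_mem _ h)).2
    obtain ⟨i₀, hi₀K, hi₀⟩ := hsurj _ hmS
    have hfs := hf s; rw [dif_pos h] at hfs
    have hcond : t i₀ ≤ s ∧ (i₀ + 1 = S.card ∨ s < t (i₀ + 1)) := by
      constructor
      · rw [hi₀]; exact hmle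
      · by_cases hK : i₀ + 1 = S.card
        · exact Or.inl hK
        · right
          have hi₁K : i₀ + 1 < S.card := by omega
          by_contra hle
          push_neg at hle
          have h2 : t (i₀+1) ≤ (S.filter (· ≤ s)).max' h :=
            le_max'_filter (hmem _ hi₁K) hle h
          rw [← hi₀] at h2
          exact absurd (hmono (Nat.lt_succ_self i₀)) (not_lt.2 h2)
    have hsum : (∑ i ∈ Finset.range S.card,
        if t i ≤ s ∧ (i + 1 = S.card ∨ s < t (i + 1)) then f (t i) else 0)
        = (if t i₀ ≤ s ∧ (i₀ + 1 = S.card ∨ s < t (i₀ + 1)) then f (t i₀) else 0) := by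
      apply Finset.sum_eq_single_of_mem i₀ (Finset.mem_range.2 hi₀K)
      intro i hi hne
      rw [if_neg]
      rintro ⟨hts, hor⟩
      have hiK := Finset.mem_range.1 hi
      have hile : t i ≤ (S.filter (· ≤ s)).max' h := le_max'_filter (hmem _ hiK) hts h
      rw [← hi₀] at hile
      have hii₀ : i < i₀ := lt_of_le_of_ne (hmono.le_iff_le.1 hile) hne
      rcases hor with hK | hlt
      · omega
      · have hle2 : t (i+1) ≤ t i₀ := hmono.monotone (by omega)
        rw [hi₀] at hle2
        exact absurd (lt_of_lt_of_le hlt (le_trans hle2 hmle)) (lt_irrefl s)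
    rw [hfs, hsum, if_pos hcond, hi₀]
  · have hfs := hf s; rw [dif_neg h] at hfs
    rw [hfs]
    symm
    apply Finset.sum_eq_zero
    intro i hi
    rw [if_neg]
    rintro ⟨hts, -⟩
    exact h ⟨t i, mem_filter_le (hmem _ (Finset.mem_range.1 hi)) hts⟩

/-- A step function is a scalar multiple of a `U^r` atom, with controlled scalar. -/
lemma atomize {r : ℝ} (hr : 1 ≤ r) {f : ℝ → H2} {S : Finset ℝ} (hS : S.Nonempty)
    (hf : stepOn f S) {B : ℝ} (hB : 0 ≤ B) (hval : ∀ x ∈ S, ‖f x‖ ≤ B) :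
    ∃ (lam : ℝ) (a : ℝ → H2), 0 ≤ lam ∧ lam ≤ (S.card : ℝ) ^ (1/r) * B ∧
      IsUpAtom r a ∧ ∀ s, f s = ((lam : ℝ) : ℂ) • a s := by
  have hr0 : (0:ℝ) < r := lt_of_lt_of_le one_pos hr
  obtain ⟨t, hmono, hmem, hrep⟩ := stepOn_rep hS hf
  set Q : ℝ := ∑ i ∈ Finset.range S.card, ‖f (t i)‖ ^ r with hQ
  have hQ0 : 0 ≤ Q := Finset.sum_nonneg fun i _ => Real.rpow_nonneg (norm_nonneg _) r
  set lam : ℝ := Q ^ (1/r) with hlam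
  have hlam0 : 0 ≤ lam := Real.rpow_nonneg hQ0 _
  have hlamle : lam ≤ (S.card : ℝ) ^ (1/r) * B := by
    have hQle : Q ≤ (S.card : ℝ) * B ^ r := by
      rw [hQ]
      calc ∑ i ∈ Finset.range S.card, ‖f (t i)‖ ^ r
          ≤ ∑ _i ∈ Finset.range S.card, B ^ r :=
            Finset.sum_le_sum fun i hi => Real.rpow_le_rpow (norm_nonneg _)
              (hval _ (hmem _ (Finset.mem_range.1 hi))) hr0.le
        _ = (S.card : ℝ) * B ^ r := by
            rw [Finset.sum_const, Finset.card_range, nsmul_eq_mul]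
    calc lam ≤ ((S.card : ℝ) * B ^ r) ^ (1/r) :=
          Real.rpow_le_rpow hQ0 hQle (by positivity)
      _ = (S.card : ℝ) ^ (1/r) * B := by
          rw [Real.mul_rpow (Nat.cast_nonneg _) (Real.rpow_nonneg hB _), one_div,
            Real.rpow_rpow_inv hB hr0.ne']
  by_cases hQz : Q = 0
  · obtain ⟨a, ha⟩ := exists_atom r
    refine ⟨0, a, le_rfl, mul_nonneg (Real.rpow_nonneg (Nat.cast_nonneg _) _) hB, ha, fun s => ?_⟩
    rw [Complex.ofReal_zero, zero_smul, hrep s]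
    apply Finset.sum_eq_zero
    intro i hi
    have hzero : f (t i) = 0 := by
      have hterm : ‖f (t i)‖ ^ r = 0 := by
        have hle : ‖f (t i)‖ ^ r ≤ Q := by
          rw [hQ]
          exact Finset.single_le_sum (f := fun i => ‖f (t i)‖ ^ r)
            (fun j _ => Real.rpow_nonneg (norm_nonneg _) r) hi
        have hge : 0 ≤ ‖f (t i)‖ ^ r := Real.rpow_nonneg (norm_nonneg _) r
        rw [hQz] at hle
        linarith
      by_contra hne
      have hpos : 0 < ‖f (t i)‖ := norm_pos_iff.2 hne
      exact absurd hterm (Real.rpow_pos_of_pos hpos r).ne'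
    rw [hzero]
    simp
  · have hQpos : 0 < Q := lt_of_le_of_ne hQ0 (Ne.symm hQz)
    have hlampos : 0 < lam := Real.rpow_pos_of_pos hQpos _
    have hlamC : ((lam : ℝ) : ℂ) ≠ 0 := Complex.ofReal_ne_zero.2 hlampos.ne'
    refine ⟨lam, fun s => (((lam : ℝ) : ℂ))⁻¹ • f s, hlam0, hlamle, ?_,
      fun s => by rw [smul_inv_smul₀ hlamC]⟩
    refine ⟨S.card, t, fun i => (((lam : ℝ) : ℂ))⁻¹ • f (t i),
      Finset.card_pos.2 hS, hmono, ?_, ?_⟩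
    · have hterm : ∀ i, ‖(((lam : ℝ) : ℂ))⁻¹ • f (t i)‖ ^ r = lam⁻¹ ^ r * ‖f (t i)‖ ^ r := by
        intro i
        rw [norm_smul, norm_inv, Complex.norm_real, Real.norm_eq_abs, abs_of_pos hlampos,
          Real.mul_rpow (by positivity) (norm_nonneg _)]
      have hinv : lam⁻¹ ^ r = Q⁻¹ := by
        rw [Real.inv_rpow hlam0, hlam, one_div, Real.rpow_inv_rpow hQ0 hr0.ne']
      calc ∑ i ∈ Finset.range S.card, ‖(((lam : ℝ) : ℂ))⁻¹ • f (t i)‖ ^ r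
          = ∑ i ∈ Finset.range S.card, lam⁻¹ ^ r * ‖f (t i)‖ ^ r :=
            Finset.sum_congr rfl fun i _ => hterm i
        _ = lam⁻¹ ^ r * Q := by rw [← Finset.mul_sum, hQ]
        _ = 1 := by rw [hinv, inv_mul_cancel₀ hQz]
    · intro s
      dsimp only
      rw [hrep s, Finset.smul_sum]
      refine Finset.sum_congr rfl fun i _ => ?_
      split_ifs <;> simp

/-- Any concrete atomic decomposition bounds the `U^r` norm. -/
lemma uNorm_le_decomp {r : ℝ} {u : ℝ → H2} (c : ℕ → ℂ) (a : ℕ → ℝ → H2)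
    (ha : ∀ j, IsUpAtom r (a j)) (hs : Summable fun j => ‖c j‖)
    (hsum : ∀ s, HasSum (fun j => c j • a j s) (u s)) :
    uNorm r u ≤ ENNReal.ofReal (∑' j, ‖c j‖) := by
  unfold uNorm
  exact iInf_le_of_le c (iInf_le_of_le a (iInf_le_of_le ha (iInf_le_of_le hs
    (iInf_le_of_le hsum le_rfl))))

/-- Atoms are pointwise bounded by `1`. -/
lemma atom_norm_le {r : ℝ} (hr : 0 < r) {a : ℝ → H2} (ha : IsUpAtom r a) (s : ℝ) :
    ‖a s‖ ≤ 1 := by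
  obtain ⟨K, t, φ, hK, hmono, hsum1, hform⟩ := ha
  rw [hform s]
  have huniq : ∀ i j, i < j → j < K →
      (t i ≤ s ∧ (i + 1 = K ∨ s < t (i + 1))) →
      (t j ≤ s ∧ (j + 1 = K ∨ s < t (j + 1))) → False := by
    rintro i j hij hjK ⟨hi1, hi2⟩ ⟨hj1, hj2⟩
    rcases hi2 with hi2 | hi2
    · omega
    · have hle : t (i+1) ≤ t j := hmono.monotone (by omega)
      linarith
  by_cases hex : ∃ i, i ∈ Finset.range K ∧ (t i ≤ s ∧ (i + 1 = K ∨ s < t (i + 1)))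
  · obtain ⟨i₀, hi₀m, hi₀c⟩ := hex
    have hother : ∀ j ∈ Finset.range K, j ≠ i₀ →
        (if t j ≤ s ∧ (j + 1 = K ∨ s < t (j + 1)) then φ j else 0) = 0 := by
      intro j hj hne
      rw [if_neg]
      intro hjc
      rcases lt_or_gt_of_ne hne with h1 | h1
      · exact huniq j i₀ h1 (Finset.mem_range.1 hi₀m) hjc hi₀c
      · exact huniq i₀ j h1 (Finset.mem_range.1 hj) hi₀c hjc
    have hsum : (∑ i ∈ Finset.range K,
        if t i ≤ s ∧ (i + 1 = K ∨ s < t (i + 1)) then φ i else 0) = φ i₀ := by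
      rw [Finset.sum_eq_single_of_mem i₀ hi₀m hother, if_pos hi₀c]
    rw [hsum]
    have hle : ‖φ i₀‖ ^ r ≤ 1 := by
      rw [← hsum1]
      exact Finset.single_le_sum (f := fun i => ‖φ i‖ ^ r)
        (fun j _ => Real.rpow_nonneg (norm_nonneg _) r) hi₀m
    by_contra hgt
    push_neg at hgt
    have hlt : (1:ℝ) < ‖φ i₀‖ ^ r := by
      calc (1:ℝ) = 1 ^ r := (Real.one_rpow r).symm
        _ < ‖φ i₀‖ ^ r := Real.rpow_lt_rpow (by norm_num) hgt hr
    linarith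
  · have hex' : ∀ i ∈ Finset.range K, ¬ (t i ≤ s ∧ (i + 1 = K ∨ s < t (i + 1))) :=
      fun i hi hc => hex ⟨i, hi, hc⟩
    have hz : (∑ i ∈ Finset.range K,
        if t i ≤ s ∧ (i + 1 = K ∨ s < t (i + 1)) then φ i else 0) = 0 := by
      apply Finset.sum_eq_zero
      intro i hi
      rw [if_neg (hex' i hi)]
    rw [hz, norm_zero]
    norm_num

end Interp17Aux

section Interp17Stop

open Metric

/-- Stopping-time approximation of a right-continuous function of bounded `p`-variation
by a step function, with control on the number of jumps. -/
lemma stopping (v : ℝ → H2) (hrc : RightCont v) (h0 : Tendsto v atBot (nhds 0))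
    (p V : ℝ) (hp : 0 < p) (hV : 0 < V)
    (hvar : ∀ (m : ℕ) (t : ℕ → ℝ), StrictMono t →
      ∑ i ∈ Finset.range m, ‖v (t (i+1)) - v (t i)‖ ^ p ≤ V ^ p)
    (ε : ℝ) (hε : 0 < ε) :
    ∃ S : Finset ℝ, S.Nonempty ∧ ((S.card : ℝ) ≤ V^p/ε^p + 1) ∧
      ∀ s, ‖v s - stepApprox v S s‖ ≤ ε := by
  classical
  have hεp : (0:ℝ) < ε ^ p := Real.rpow_pos_of_pos hε p
  -- starting point
  have hv0 : ∀ᶠ t in atBot, ‖v t‖ < ε := by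
    have hn : Tendsto (fun t => ‖v t‖) atBot (nhds 0) := by
      simpa using h0.norm
    exact hn.eventually_lt_const hε
  obtain ⟨a₀, ha₀⟩ := eventually_atBot.1 hv0
  set A : ℝ → Set ℝ := fun a => {x | a < x ∧ ε < ‖v x - v a‖} with hA
  have hbdd : ∀ a, BddBelow (A a) := fun a => ⟨a, fun x hx => hx.1.le⟩
  have hlt : ∀ a, (A a).Nonempty → a < sInf (A a) := by
    intro a hne
    have hball : v ⁻¹' (Metric.ball (v a) ε) ∈ nhdsWithin a (Set.Ici a) :=
      hrc a (Metric.ball_mem_nhds (v a) hε)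
    rw [Metric.mem_nhdsWithin_iff] at hball
    obtain ⟨δ, hδ0, hδ⟩ := hball
    have hgeδ : ∀ x ∈ A a, a + δ ≤ x := by
      intro x hx
      by_contra hlt'
      push_neg at hlt'
      have hxball : x ∈ Metric.ball a δ ∩ Set.Ici a := by
        constructor
        · rw [Metric.mem_ball, Real.dist_eq, _root_.abs_of_pos (sub_pos.2 hx.1)]
          linarith
        · exact hx.1.le
      have hmem := hδ hxball
      rw [Set.mem_preimage, Metric.mem_ball, dist_eq_norm] at hmem
      exact absurd hx.2 (not_lt.2 hmem.le)
    calc a < a + δ := by linarith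
      _ ≤ sInf (A a) := le_csInf hne hgeδ
  have hjump : ∀ a, (A a).Nonempty → ε ≤ ‖v (sInf (A a)) - v a‖ := by
    intro a hne
    by_contra hcon
    push_neg at hcon
    set b := sInf (A a) with hb
    set η := ε - ‖v b - v a‖ with hη
    have hη0 : 0 < η := by simp only [hη]; linarith
    have hball : v ⁻¹' (Metric.ball (v b) η) ∈ nhdsWithin b (Set.Ici b) :=
      hrc b (Metric.ball_mem_nhds (v b) hη0)
    rw [Metric.mem_nhdsWithin_iff] at hball
    obtain ⟨δ, hδ0, hδ⟩ := hball
    obtain ⟨x, hxA, hxlt⟩ := (csInf_lt_iff (hbdd a) hne).1 (by linarith : sInf (A a) < b + δ)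
    have hxge : b ≤ x := csInf_le (hbdd a) hxA
    have hxball : x ∈ Metric.ball b δ ∩ Set.Ici b := by
      constructor
      · rw [Metric.mem_ball, Real.dist_eq, _root_.abs_of_nonneg (by linarith)]
        linarith
      · exact hxge
    have hxnear := hδ hxball
    rw [Set.mem_preimage, Metric.mem_ball, dist_eq_norm] at hxnear
    have hxfar : ε < ‖v x - v a‖ := hxA.2
    have htri : ‖v x - v a‖ ≤ ‖v x - v b‖ + ‖v b - v a‖ := by
      have := norm_add_le (v x - v b) (v b - v a)
      rwa [sub_add_sub_cancel] at this
    simp only [hη] at hxnear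
    linarith
  -- the stopping recursion
  set nxt : ℝ → ℝ := fun a => if h : (A a).Nonempty then sInf (A a) else a + 1 with hnxt
  have hstep : ∀ a, a < nxt a := by
    intro a
    simp only [hnxt]
    split_ifs with h
    · exact hlt a h
    · linarith
  set τ : ℕ → ℝ := fun k => Nat.rec (motive := fun _ => ℝ) a₀ (fun _ b => nxt b) k with hτ
  have hτ0 : τ 0 = a₀ := rfl
  have hτs : ∀ k, τ (k+1) = nxt (τ k) := fun k => rfl
  have hτmono : StrictMono τ := strictMono_nat_of_lt_succ (fun k => by rw [hτs]; exact hstep _)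
  have hterm : ∃ k, ¬ (A (τ k)).Nonempty := by
    by_contra hall
    push_neg at hall
    obtain ⟨m, hm⟩ := exists_nat_gt (V^p / ε^p)
    have hsum := hvar m τ hτmono
    have hterm' : ∀ i, ε ^ p ≤ ‖v (τ (i+1)) - v (τ i)‖ ^ p := by
      intro i
      apply Real.rpow_le_rpow hε.le _ hp.le
      have : τ (i+1) = sInf (A (τ i)) := by
        rw [hτs, hnxt]; simp only [dif_pos (hall i)]
      rw [this]
      exact hjump _ (hall i)
    have hmain : (m:ℝ) * ε ^ p ≤ V ^ p := by
      calc (m:ℝ) * ε^p = ∑ _i ∈ Finset.range m, ε^p := by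
            rw [Finset.sum_const, Finset.card_range, nsmul_eq_mul]
        _ ≤ ∑ i ∈ Finset.range m, ‖v (τ (i+1)) - v (τ i)‖ ^ p :=
            Finset.sum_le_sum (fun i _ => hterm' i)
        _ ≤ V^p := hsum
    rw [div_lt_iff₀ hεp] at hm
    linarith
  set K := Nat.find hterm with hK
  have hKempty : ¬ (A (τ K)).Nonempty := Nat.find_spec hterm
  have hKne : ∀ k, k < K → (A (τ k)).Nonempty := fun k hk => not_not.1 (Nat.find_min hterm hk)
  have hτinf : ∀ k, k < K → τ (k+1) = sInf (A (τ k)) := by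
    intro k hk
    rw [hτs, hnxt]; simp only [dif_pos (hKne k hk)]
  have hcount : (K:ℝ) * ε^p ≤ V^p := by
    have hsum := hvar K τ hτmono
    have hterm' : ∀ i, i < K → ε ^ p ≤ ‖v (τ (i+1)) - v (τ i)‖ ^ p := by
      intro i hi
      apply Real.rpow_le_rpow hε.le _ hp.le
      rw [hτinf i hi]
      exact hjump _ (hKne i hi)
    calc (K:ℝ)*ε^p = ∑ _i ∈ Finset.range K, ε^p := by
          rw [Finset.sum_const, Finset.card_range, nsmul_eq_mul]
      _ ≤ ∑ i ∈ Finset.range K, ‖v (τ (i+1)) - v (τ i)‖ ^ p :=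
          Finset.sum_le_sum (fun i hi => hterm' i (Finset.mem_range.1 hi))
      _ ≤ V^p := hsum
  refine ⟨(Finset.range (K+1)).image τ,
    ⟨τ 0, Finset.mem_image_of_mem τ (Finset.mem_range.2 (Nat.succ_pos K))⟩, ?_, ?_⟩
  · have hcard : (((Finset.range (K+1)).image τ).card : ℝ) ≤ (K:ℝ) + 1 := by
      have h1 : ((Finset.range (K+1)).image τ).card ≤ K + 1 := by
        simpa using Finset.card_image_le (s := Finset.range (K+1)) (f := τ)
      exact_mod_cast h1
    have hKle : (K:ℝ) ≤ V^p/ε^p := (le_div_iff₀ hεp).2 hcount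
    linarith
  · intro s
    set S := (Finset.range (K+1)).image τ with hS
    by_cases hne : (S.filter (· ≤ s)).Nonempty
    · simp only [stepApprox]
      rw [dif_pos hne]
      set m := (S.filter (· ≤ s)).max' hne with hm
      have hmmem := Finset.max'_mem _ hne
      have hmS : m ∈ S := (Finset.mem_filter.1 hmmem).1
      have hmle : m ≤ s := (Finset.mem_filter.1 hmmem).2
      obtain ⟨k, hk, hkm⟩ := Finset.mem_image.1 hmS
      have hkK : k ≤ K := Nat.lt_succ_iff.1 (Finset.mem_range.1 hk)
      have hnotin : s ∉ A (τ k) := by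
        rcases eq_or_lt_of_le hkK with heq | hlt'
        · rw [heq]
          exact fun hin => hKempty ⟨s, hin⟩
        · have hk1 : τ (k+1) ∈ S := Finset.mem_image_of_mem τ (Finset.mem_range.2 (Nat.succ_lt_succ hlt'))
          have hslt : s < τ (k+1) := by
            by_contra hge
            push_neg at hge
            have hlem : τ (k+1) ≤ m := le_max'_filter hk1 hge hne
            rw [← hkm] at hlem
            exact absurd (hτmono (Nat.lt_succ_self k)) (not_lt.2 hlem)
          rw [hτinf k hlt'] at hslt
          exact notMem_of_lt_csInf hslt (hbdd _)
      rw [← hkm]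
      rcases eq_or_lt_of_le (show τ k ≤ s from hkm ▸ hmle) with heq | hlt2
      · rw [← heq, sub_self, norm_zero]
        exact hε.le
      · simp only [hA, Set.mem_setOf_eq, not_and, not_lt] at hnotin
        exact hnotin hlt2
    · simp only [stepApprox]
      rw [dif_neg hne, sub_zero]
      have ha0S : τ 0 ∈ S := Finset.mem_image_of_mem τ (Finset.mem_range.2 (Nat.succ_pos K))
      have hsa : ¬ τ 0 ≤ s := fun hle => hne ⟨τ 0, Finset.mem_filter.2 ⟨ha0S, hle⟩⟩
      push_neg at hsa
      exact (ha₀ s (by rw [← hτ0]; linarith)).le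

end Interp17Stop

set_option maxHeartbeats 1600000

/-- **Interpolation between `U^p` and `V^p`.** Let `1 < p < q`, `E` a
Banach space and `T : U^q → E` bounded with norm `C_q`, and suppose
`‖Tu‖_E ≤ C_p ‖u‖_{U^p}` with `0 < C_p ≤ C_q`. Then for every `v ∈ V^p_{rc}`,
`‖Tv‖_E ≤ C_{p,q} C_p (log(C_q/C_p) + 1) ‖v‖_{V^p}` with `C_{p,q}` depending only
on `p, q`. -/
theorem statement_17 (p q : ℝ) (hp : 1 < p) (hpq : p < q) :
    ∃ Cpq : ℝ, 0 < Cpq ∧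
      ∀ (E : Type) [NormedAddCommGroup E] [NormedSpace ℂ E] [CompleteSpace E],
        ∀ (T : (ℝ → H2) →ₗ[ℂ] E) (Cp Cq : ℝ), 0 < Cp → Cp ≤ Cq →
          (∀ u : ℝ → H2, uNorm q u ≠ ⊤ → ‖T u‖ ≤ Cq * (uNorm q u).toReal) →
          (∀ u : ℝ → H2, uNorm p u ≠ ⊤ → ‖T u‖ ≤ Cp * (uNorm p u).toReal) →
          ∀ v : ℝ → H2, InVprc p v →
            ‖T v‖ ≤ Cpq * Cp * (Real.log (Cq / Cp) + 1) * (vNorm p v).toReal := by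
  classical
  have hp0 : (0:ℝ) < p := lt_trans one_pos hp
  have hq0 : (0:ℝ) < q := lt_trans hp0 hpq
  have hq1 : (1:ℝ) < q := lt_trans hp hpq
  have hpq1 : p/q < 1 := (div_lt_one hq0).2 hpq
  have hpq0 : (0:ℝ) < p/q := div_pos hp0 hq0
  set θ : ℝ := (1/2 : ℝ) ^ ((1:ℝ) - p/q) with hθdef
  have hθ0 : 0 < θ := Real.rpow_pos_of_pos (by norm_num) _
  have hθ1 : θ < 1 := Real.rpow_lt_one (by norm_num) (by norm_num) (by linarith)
  have h1θ : 0 < 1 - θ := by linarith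
  set l : ℝ := -Real.log θ with hldef
  have hl0 : 0 < l := by
    rw [hldef, hθdef, Real.log_rpow (by norm_num)]
    have hlog : Real.log (1/2 : ℝ) < 0 := Real.log_neg (by norm_num) (by norm_num)
    nlinarith
  refine ⟨12 * (1/l + 2 + 1/(1-θ)), by positivity, ?_⟩
  intro E _ _ _ T Cp Cq hCp hCpCq hTq hTp v hv
  have hCq0 : (0:ℝ) < Cq := lt_of_lt_of_le hCp hCpCq
  obtain ⟨hfin, hrc, hv0⟩ := hv
  set V : ℝ := (vNorm p v).toReal with hVdef
  have hV0 : 0 ≤ V := ENNReal.toReal_nonneg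
  have hbase : ∀ (m : ℕ) (t : ℕ → ℝ), StrictMono t →
      (∑ i ∈ Finset.range m, ‖v (t (i+1)) - v (t i)‖ ^ p) + ‖v (t m)‖ ^ p ≤ V ^ p := by
    intro m t ht
    have h1 : (ENNReal.ofReal ((∑ i ∈ Finset.range m, ‖v (t (i+1)) - v (t i)‖ ^ p)
        + ‖v (t m)‖ ^ p)) ^ ((1:ℝ)/p) ≤ vNorm p v := by
      unfold vNorm
      exact le_iSup_of_le m (le_iSup_of_le t (le_iSup_of_le ht le_rfl))
    have h2 := ENNReal.rpow_le_rpow h1 hp0.le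
    rw [← ENNReal.rpow_mul, one_div, inv_mul_cancel₀ hp0.ne', ENNReal.rpow_one] at h2
    have h3 : vNorm p v ^ (p:ℝ) ≠ ⊤ := (ENNReal.rpow_lt_top_of_nonneg hp0.le hfin.ne).ne
    have h4 := ENNReal.toReal_mono h3 h2
    have hnn : (0:ℝ) ≤ (∑ i ∈ Finset.range m, ‖v (t (i+1)) - v (t i)‖ ^ p) + ‖v (t m)‖ ^ p := by
      have hs : (0:ℝ) ≤ ∑ i ∈ Finset.range m, ‖v (t (i+1)) - v (t i)‖ ^ p :=
        Finset.sum_nonneg fun i _ => Real.rpow_nonneg (norm_nonneg _) _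
      have hs2 : (0:ℝ) ≤ ‖v (t m)‖ ^ p := Real.rpow_nonneg (norm_nonneg _) _
      linarith
    rw [ENNReal.toReal_ofReal hnn] at h4
    rwa [← ENNReal.toReal_rpow] at h4
  have hnorm : ∀ s, ‖v s‖ ≤ V := by
    intro s
    have hmono : StrictMono (fun i : ℕ => s + (i:ℝ)) := by
      intro a b hab
      simp only [add_lt_add_iff_left, Nat.cast_lt]
      exact hab
    have h1 := hbase 0 (fun i : ℕ => s + (i:ℝ)) hmono
    simp only [Finset.range_zero, Finset.sum_empty, Nat.cast_zero, add_zero, zero_add] at h1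
    by_contra hgt
    push_neg at hgt
    have h2 : V ^ p < ‖v s‖ ^ p := Real.rpow_lt_rpow hV0 hgt hp0
    linarith
  have hvar : ∀ (m : ℕ) (t : ℕ → ℝ), StrictMono t →
      ∑ i ∈ Finset.range m, ‖v (t (i+1)) - v (t i)‖ ^ p ≤ V ^ p := by
    intro m t ht
    have h1 := hbase m t ht
    have h2 : (0:ℝ) ≤ ‖v (t m)‖ ^ p := Real.rpow_nonneg (norm_nonneg _) _
    linarith
  by_cases hVz : V = 0
  · have hzero : v = 0 := by
      funext s
      have h1 := hnorm s
      rw [hVz] at h1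
      simpa using norm_le_zero_iff.1 h1
    rw [hzero, map_zero, norm_zero, hVz, mul_zero]
  · have hVpos : 0 < V := lt_of_le_of_ne hV0 (Ne.symm hVz)
    set w : ℕ → ℝ := fun n => (1/2 : ℝ) ^ n with hwdef
    have hw0 : ∀ n, 0 < w n := fun n => pow_pos (by norm_num) n
    have hw1 : ∀ n, w n ≤ 1 := fun n => pow_le_one₀ (by norm_num) (by norm_num)
    have hwsucc : ∀ n, w (n+1) = w n * (1/2) := fun n => pow_succ _ _
    have hwmono : ∀ n, w (n+1) ≤ w n := by
      intro n
      rw [hwsucc n]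
      nlinarith [hw0 n]
    have hstop : ∀ n : ℕ, ∃ S : Finset ℝ, S.Nonempty ∧
        ((S.card : ℝ) ≤ V^p/(V * w n)^p + 1) ∧
        ∀ s, ‖v s - stepApprox v S s‖ ≤ V * w n := by
      intro n
      exact stopping v hrc hv0 p V hp0 hVpos hvar (V * w n) (by positivity)
    choose S hSne hScard hSapp using hstop
    have hwp : ∀ n, (0:ℝ) < (w n) ^ p := fun n => Real.rpow_pos_of_pos (hw0 n) p
    have hwple : ∀ n, (w n) ^ p ≤ 1 := fun n => Real.rpow_le_one (hw0 n).le (hw1 n) hp0.le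
    have hwpmono : ∀ n, (w (n+1))^p ≤ (w n)^p :=
      fun n => Real.rpow_le_rpow (hw0 _).le (hwmono n) hp0.le
    have hcardS : ∀ n, ((S n).card : ℝ) ≤ 2 / (w n)^p := by
      intro n
      have h1 := hScard n
      have hVp : (0:ℝ) < V ^ p := Real.rpow_pos_of_pos hVpos p
      rw [Real.mul_rpow hVpos.le (hw0 n).le] at h1
      have h3 : V^p/(V^p * (w n)^p) = 1/(w n)^p := by
        rw [div_mul_eq_div_div, div_self hVp.ne']
      rw [h3] at h1
      have h4 : (1:ℝ) ≤ 1/(w n)^p := by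
        rw [le_div_iff₀ (hwp n)]
        simpa using hwple n
      calc ((S n).card : ℝ) ≤ 1/(w n)^p + 1 := h1
        _ ≤ 1/(w n)^p + 1/(w n)^p := by linarith
        _ = 2/(w n)^p := by ring
    set g : ℕ → ℝ → H2 := fun n => stepApprox v (S n) with hgdef
    set u : ℕ → ℝ → H2 :=
      fun n => Nat.rec (motive := fun _ => ℝ → H2) (g 0)
        (fun m _ => fun s => g (m+1) s - g m s) n with hudef
    have hu0 : u 0 = g 0 := rfl
    have hus : ∀ m, u (m+1) = fun s => g (m+1) s - g m s := fun m => rfl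
    have htel : ∀ (m : ℕ) (s : ℝ), ∑ n ∈ Finset.range (m+1), u n s = g m s := by
      intro m
      induction m with
      | zero =>
          intro s
          rw [Finset.sum_range_one, hu0]
      | succ m ih =>
          intro s
          rw [Finset.sum_range_succ, ih s, hus m]
          dsimp only
          abel
    set TS : ℕ → Finset ℝ :=
      fun n => Nat.rec (motive := fun _ => Finset ℝ) (S 0) (fun m _ => S (m+1) ∪ S m) n
      with hTSdef
    have hTS0 : TS 0 = S 0 := rfl
    have hTSs : ∀ m, TS (m+1) = S (m+1) ∪ S m := fun m => rfl
    have hTSne : ∀ n, (TS n).Nonempty := by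
      intro n
      cases n with
      | zero => exact hSne 0
      | succ m =>
          rw [hTSs m]
          exact (hSne (m+1)).inl
    have hTSstep : ∀ n, stepOn (u n) (TS n) := by
      intro n
      cases n with
      | zero =>
          rw [hu0, hTS0]
          exact stepOn_stepApprox v (S 0)
      | succ m =>
          rw [hus m, hTSs m]
          exact stepOn_sub
            (stepOn_mono (stepOn_stepApprox v (S (m+1))) Finset.subset_union_left)
            (stepOn_mono (stepOn_stepApprox v (S m)) Finset.subset_union_right)
    have hTSval : ∀ n, ∀ x ∈ TS n, ‖u n x‖ ≤ 3 * V * w n := by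
      intro n
      cases n with
      | zero =>
          intro x _
          rw [hu0]
          have h1 := hSapp 0 x
          have h2 := hnorm x
          have h3 : ‖g 0 x‖ ≤ ‖g 0 x - v x‖ + ‖v x‖ := by
            have h4 := norm_add_le (g 0 x - v x) (v x)
            rwa [sub_add_cancel] at h4
          rw [norm_sub_rev] at h3
          have hw00 : w 0 = 1 := pow_zero _
          rw [hw00] at h1 ⊢
          have hgx : g 0 x = stepApprox v (S 0) x := rfl
          rw [hgx]
          rw [hgx] at h3
          linarith
      | succ m =>
          intro x _
          rw [hus m]
          dsimp only
          have h1 := hSapp (m+1) x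
          have h2 := hSapp m x
          have h3 : ‖g (m+1) x - g m x‖ ≤ ‖v x - g (m+1) x‖ + ‖v x - g m x‖ := by
            have h4 := norm_add_le (g (m+1) x - v x) (v x - g m x)
            rw [sub_add_sub_cancel] at h4
            rwa [norm_sub_rev (g (m+1) x) (v x)] at h4
          have hg1 : g (m+1) x = stepApprox v (S (m+1)) x := rfl
          have hg2 : g m x = stepApprox v (S m) x := rfl
          rw [hg1, hg2] at h3
          rw [hg1, hg2]
          have heq : V * w (m+1) + V * w m = 3 * V * w (m+1) := by
            rw [hwsucc m]
            ring
          linarith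
    have hTScard : ∀ n, ((TS n).card : ℝ) ≤ 4 / (w n)^p := by
      intro n
      cases n with
      | zero =>
          rw [hTS0]
          have h1 := hcardS 0
          have h2 : (2:ℝ)/(w 0)^p ≤ 4/(w 0)^p := by
            have h5 := hwp 0
            rw [div_le_div_iff₀ h5 h5]
            nlinarith
          linarith
      | succ m =>
          rw [hTSs m]
          have hle : (((S (m+1) ∪ S m).card : ℕ) : ℝ)
              ≤ ((S (m+1)).card : ℝ) + ((S m).card : ℝ) := by
            exact_mod_cast Finset.card_union_le (S (m+1)) (S m)
          have h1 := hcardS (m+1)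
          have h2 := hcardS m
          have h3 : (2:ℝ)/(w m)^p ≤ 2/(w (m+1))^p := by
            rw [div_le_div_iff₀ (hwp m) (hwp (m+1))]
            nlinarith [hwpmono m, hwp (m+1), hwp m]
          have h4 : (2:ℝ)/(w (m+1))^p + 2/(w (m+1))^p = 4/(w (m+1))^p := by ring
          linarith
    -- uniform atomization for an exponent r ≥ 1
    have key : ∀ (r : ℝ), 1 ≤ r → ∀ n, ∃ (lam : ℝ) (a : ℝ → H2), 0 ≤ lam ∧
        lam ≤ 12 * V * (w n) ^ ((1:ℝ) - p/r) ∧ IsUpAtom r a ∧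
        ∀ s, u n s = ((lam : ℝ) : ℂ) • a s := by
      intro r hr n
      obtain ⟨lam, a, h1, h2, h3, h4⟩ := atomize hr (hTSne n) (hTSstep n)
        (by positivity : (0:ℝ) ≤ 3 * V * w n) (hTSval n)
      refine ⟨lam, a, h1, ?_, h3, h4⟩
      have hr0 : (0:ℝ) < r := lt_of_lt_of_le one_pos hr
      have hcard_rpow : (((TS n).card : ℝ)) ^ ((1:ℝ)/r) ≤ (4 / (w n)^p) ^ ((1:ℝ)/r) :=
        Real.rpow_le_rpow (Nat.cast_nonneg _) (hTScard n) (by positivity)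
      have heq1 : ((w n)^p : ℝ) ^ ((1:ℝ)/r) = (w n) ^ (p/r) := by
        rw [← Real.rpow_mul (hw0 n).le, mul_one_div]
      have h4r : (4:ℝ)^((1:ℝ)/r) ≤ 4 := by
        calc (4:ℝ)^((1:ℝ)/r) ≤ 4 ^ (1:ℝ) :=
              Real.rpow_le_rpow_of_exponent_le (by norm_num) ((div_le_one hr0).2 hr)
          _ = 4 := Real.rpow_one 4
      have hwpr : (0:ℝ) < (w n) ^ (p/r) := Real.rpow_pos_of_pos (hw0 n) _
      have hw1pr : (0:ℝ) < (w n) ^ ((1:ℝ) - p/r) := Real.rpow_pos_of_pos (hw0 n) _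
      have heq2 : w n * ((w n) ^ (p/r))⁻¹ = (w n) ^ ((1:ℝ) - p/r) := by
        rw [Real.rpow_sub (hw0 n), Real.rpow_one]
        exact (div_eq_mul_inv _ _).symm
      calc lam ≤ (((TS n).card : ℝ)) ^ ((1:ℝ)/r) * (3 * V * w n) := h2
        _ ≤ (4 / (w n)^p) ^ ((1:ℝ)/r) * (3 * V * w n) :=
            mul_le_mul_of_nonneg_right hcard_rpow (by positivity)
        _ = (4:ℝ)^((1:ℝ)/r) * (3*V) * (w n * ((w n) ^ (p/r))⁻¹) := by
            rw [Real.div_rpow (by norm_num) (hwp n).le, heq1]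
            field_simp
        _ = (4:ℝ)^((1:ℝ)/r) * (3*V) * ((w n) ^ ((1:ℝ) - p/r)) := by rw [heq2]
        _ ≤ 4 * (3*V) * ((w n) ^ ((1:ℝ) - p/r)) := by
            apply mul_le_mul_of_nonneg_right _ hw1pr.le
            exact mul_le_mul_of_nonneg_right h4r (by positivity)
        _ = 12 * V * (w n) ^ ((1:ℝ) - p/r) := by ring
    choose lamP aP hlamP0 hlamPle haP huP using fun n => key p hp.le n
    choose lamQ aQ hlamQ0 hlamQle haQ huQ using fun n => key q hq1.le n
    have hlamPle' : ∀ n, lamP n ≤ 12 * V := by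
      intro n
      have h1 := hlamPle n
      have hpp : (1:ℝ) - p/p = 0 := by
        rw [div_self hp0.ne']
        ring
      rwa [hpp, Real.rpow_zero, mul_one] at h1
    have hwθ : ∀ n : ℕ, (w n : ℝ) ^ ((1:ℝ) - p/q) = θ^n := by
      intro n
      have hwn : w n = (1/2:ℝ) ^ ((n:ℕ) : ℝ) := (Real.rpow_natCast _ n).symm
      rw [hwn, ← Real.rpow_mul (by norm_num : (0:ℝ) ≤ 1/2),
        mul_comm ((n:ℕ) : ℝ) ((1:ℝ) - p/q), Real.rpow_mul (by norm_num : (0:ℝ) ≤ 1/2),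
        ← hθdef, Real.rpow_natCast]
    have hlamQle' : ∀ n, lamQ n ≤ 12 * V * θ^n := by
      intro n
      have h1 := hlamQle n
      rwa [hwθ n] at h1
    -- choose the splitting index N
    set L : ℝ := Real.log (Cq/Cp) with hLdef
    have hL0 : 0 ≤ L := Real.log_nonneg ((one_le_div hCp).2 hCpCq)
    set N : ℕ := ⌈L / l⌉₊ with hNdef
    -- head decomposition: g N ∈ U^p with small norm
    set ch : ℕ → ℂ := fun j => if j < N + 1 then ((lamP j : ℝ) : ℂ) else 0 with hch
    have hchval : ∀ j, j < N + 1 → ch j = ((lamP j : ℝ) : ℂ) := by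
      intro j hj
      simp only [hch]
      rw [if_pos hj]
    have hchzero : ∀ j, ¬ j < N + 1 → ch j = 0 := by
      intro j hj
      simp only [hch]
      rw [if_neg hj]
    have hheadsummable : Summable fun j => ‖ch j‖ := by
      apply summable_of_ne_finset_zero (s := Finset.range (N+1))
      intro b hb
      rw [hchzero b (by simpa using hb), norm_zero]
    have hheadsum : ∀ s, HasSum (fun j => ch j • aP j s) (g N s) := by
      intro s
      have hterm : ∀ j, ch j • aP j s = if j < N+1 then u j s else 0 := by
        intro j
        by_cases hj : j < N + 1
        · rw [hchval j hj, if_pos hj, ← huP j s]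
        · rw [hchzero j hj, if_neg hj, zero_smul]
      have hfin2 : ∀ b ∉ Finset.range (N+1), ch b • aP b s = 0 := by
        intro b hb
        rw [hterm b, if_neg (by simpa using hb)]
      have h1 := hasSum_sum_of_ne_finset_zero (L := SummationFilter.unconditional ℕ) hfin2
      have h2 : ∑ b ∈ Finset.range (N+1), ch b • aP b s = g N s := by
        rw [← htel N s]
        apply Finset.sum_congr rfl
        intro b hb
        rw [hterm b, if_pos (Finset.mem_range.1 hb)]
      rwa [h2] at h1
    have hheadnorm : uNorm p (g N) ≤ ENNReal.ofReal (((N:ℝ)+1) * (12*V)) := by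
      refine le_trans (uNorm_le_decomp ch aP haP hheadsummable hheadsum) ?_
      apply ENNReal.ofReal_le_ofReal
      rw [tsum_eq_sum (s := Finset.range (N+1))
        (fun b hb => by rw [hchzero b (by simpa using hb), norm_zero])]
      calc ∑ b ∈ Finset.range (N+1), ‖ch b‖
          ≤ ∑ _b ∈ Finset.range (N+1), 12 * V := by
            apply Finset.sum_le_sum
            intro b hb
            rw [hchval b (Finset.mem_range.1 hb), Complex.norm_real, Real.norm_eq_abs,
              _root_.abs_of_nonneg (hlamP0 b)]
            exact hlamPle' b
        _ = ((N:ℝ)+1) * (12*V) := by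
            rw [Finset.sum_const, Finset.card_range, nsmul_eq_mul]
            push_cast
            ring
    -- tail decomposition: v - g N ∈ U^q with geometric norm
    set ct : ℕ → ℂ := fun j => ((lamQ (N+1+j) : ℝ) : ℂ) with hct
    have hctn : ∀ j, ‖ct j‖ = lamQ (N+1+j) := by
      intro j
      simp only [hct]
      rw [Complex.norm_real, Real.norm_eq_abs, _root_.abs_of_nonneg (hlamQ0 _)]
    have hctle : ∀ j, lamQ (N+1+j) ≤ 12 * V * θ^(N+1) * θ^j := by
      intro j
      calc lamQ (N+1+j) ≤ 12 * V * θ^(N+1+j) := hlamQle' _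
        _ = 12 * V * θ^(N+1) * θ^j := by rw [pow_add]; ring
    have hgeo : Summable (fun j : ℕ => 12 * V * θ^(N+1) * θ^j) :=
      (summable_geometric_of_lt_one hθ0.le hθ1).mul_left _
    have hctsummable : Summable fun j => ‖ct j‖ := by
      apply Summable.of_nonneg_of_le (fun j => norm_nonneg _) (fun j => ?_) hgeo
      rw [hctn j]
      exact hctle j
    have hw_tendsto : Tendsto (fun m : ℕ => V * w (N+m)) atTop (nhds 0) := by
      have heqf : (fun m : ℕ => V * w (N+m)) = fun m : ℕ => (V * w N) * (1/2:ℝ)^m := by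
        funext m
        have : w (N+m) = w N * (1/2:ℝ)^m := pow_add _ _ _
        rw [this]
        ring
      rw [heqf]
      have h1 := (tendsto_pow_atTop_nhds_zero_of_lt_one
        (by norm_num : (0:ℝ) ≤ 1/2) (by norm_num : (1/2:ℝ) < 1)).const_mul (V * w N)
      simpa using h1
    have htailsum : ∀ s, HasSum (fun j => ct j • aQ (N+1+j) s) (v s - g N s) := by
      intro s
      have hterm : ∀ j, ct j • aQ (N+1+j) s = u (N+1+j) s := by
        intro j
        simp only [hct]
        rw [← huQ (N+1+j) s]
      have hsummable : Summable (fun j => ct j • aQ (N+1+j) s) := by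
        apply Summable.of_norm
        apply Summable.of_nonneg_of_le (fun j => norm_nonneg _) (fun j => ?_) hgeo
        rw [norm_smul, hctn j]
        calc lamQ (N+1+j) * ‖aQ (N+1+j) s‖ ≤ lamQ (N+1+j) * 1 :=
              mul_le_mul_of_nonneg_left (atom_norm_le hq0 (haQ _) s) (hlamQ0 _)
          _ = lamQ (N+1+j) := mul_one _
          _ ≤ 12 * V * θ^(N+1) * θ^j := hctle j
      have heqm : ∀ m, ∑ j ∈ Finset.range m, ct j • aQ (N+1+j) s = g (N+m) s - g N s := by
        intro m
        induction m with
        | zero => simp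
        | succ m ih =>
            rw [Finset.sum_range_succ, ih, hterm m]
            have hidx : N+1+m = (N+m)+1 := by omega
            rw [hidx, hus (N+m)]
            have hidx2 : N+(m+1) = (N+m)+1 := by omega
            rw [hidx2]
            dsimp only
            abel
      have hpartial : Tendsto (fun m => ∑ j ∈ Finset.range m, ct j • aQ (N+1+j) s)
          atTop (nhds (v s - g N s)) := by
        rw [show (fun m => ∑ j ∈ Finset.range m, ct j • aQ (N+1+j) s)
          = fun m => g (N+m) s - g N s from funext heqm]
        have hgv : Tendsto (fun m => g (N+m) s) atTop (nhds (v s)) := by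
          rw [← tendsto_sub_nhds_zero_iff]
          apply squeeze_zero_norm (fun m => ?_) hw_tendsto
          rw [norm_sub_rev]
          exact hSapp (N+m) s
        exact hgv.sub_const (g N s)
      have h2 := hsummable.hasSum
      rwa [tendsto_nhds_unique hsummable.hasSum.tendsto_sum_nat hpartial] at h2
    have htailnorm : uNorm q (fun s => v s - g N s)
        ≤ ENNReal.ofReal (12 * V * θ^(N+1) * (1-θ)⁻¹) := by
      refine le_trans
        (uNorm_le_decomp ct (fun j => aQ (N+1+j)) (fun j => haQ _) hctsummable htailsum) ?_
      apply ENNReal.ofReal_le_ofReal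
      calc ∑' j, ‖ct j‖ ≤ ∑' j, 12 * V * θ^(N+1) * θ^j :=
            Summable.tsum_le_tsum (fun j => by rw [hctn j]; exact hctle j) hctsummable hgeo
        _ = 12 * V * θ^(N+1) * ∑' j : ℕ, θ^j := tsum_mul_left
        _ = 12 * V * θ^(N+1) * (1-θ)⁻¹ := by rw [tsum_geometric_of_lt_one hθ0.le hθ1]
    -- put the two pieces together
    have hsplit : v = g N + (fun s => v s - g N s) := by
      funext s
      simp only [Pi.add_apply]
      abel
    have hheadfin : uNorm p (g N) ≠ ⊤ := ne_top_of_le_ne_top ENNReal.ofReal_ne_top hheadnorm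
    have htailfin : uNorm q (fun s => v s - g N s) ≠ ⊤ :=
      ne_top_of_le_ne_top ENNReal.ofReal_ne_top htailnorm
    have hheadtoReal : (uNorm p (g N)).toReal ≤ ((N:ℝ)+1) * (12*V) := by
      calc (uNorm p (g N)).toReal ≤ (ENNReal.ofReal (((N:ℝ)+1) * (12*V))).toReal :=
            ENNReal.toReal_mono ENNReal.ofReal_ne_top hheadnorm
        _ = ((N:ℝ)+1) * (12*V) := ENNReal.toReal_ofReal (by positivity)
    have htailtoReal : (uNorm q (fun s => v s - g N s)).toReal
        ≤ 12 * V * θ^(N+1) * (1-θ)⁻¹ := by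
      calc (uNorm q (fun s => v s - g N s)).toReal
          ≤ (ENNReal.ofReal (12 * V * θ^(N+1) * (1-θ)⁻¹)).toReal :=
            ENNReal.toReal_mono ENNReal.ofReal_ne_top htailnorm
        _ = 12 * V * θ^(N+1) * (1-θ)⁻¹ := ENNReal.toReal_ofReal (by positivity)
    have hbound1 : ‖T (g N)‖ ≤ Cp * (((N:ℝ)+1) * (12*V)) :=
      le_trans (hTp (g N) hheadfin) (mul_le_mul_of_nonneg_left hheadtoReal hCp.le)
    have hbound2 : ‖T (fun s => v s - g N s)‖ ≤ Cq * (12 * V * θ^(N+1) * (1-θ)⁻¹) :=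
      le_trans (hTq _ htailfin) (mul_le_mul_of_nonneg_left htailtoReal hCq0.le)
    -- the choice of N
    have hθN : θ^(N+1) ≤ Cp/Cq := by
      have hθexp : θ^(N+1) = Real.exp (-((((N:ℕ):ℝ)+1) * l)) := by
        conv_lhs => rw [← Real.exp_log hθ0]
        rw [← Real.exp_nat_mul]
        congr 1
        rw [hldef]
        push_cast
        ring
      rw [hθexp]
      have h1 : L ≤ (((N:ℕ):ℝ)+1) * l := by
        have h2 : L / l ≤ ((N:ℕ):ℝ) := Nat.le_ceil _
        calc L = (L/l) * l := by field_simp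
          _ ≤ (((N:ℕ):ℝ)+1) * l := mul_le_mul_of_nonneg_right (by linarith) hl0.le
      calc Real.exp (-((((N:ℕ):ℝ)+1)*l)) ≤ Real.exp (-L) := Real.exp_le_exp.2 (by linarith)
        _ = Cp/Cq := by
            rw [hLdef, ← Real.log_inv, inv_div, Real.exp_log (div_pos hCp hCq0)]
    have hNle : ((N:ℕ):ℝ)+1 ≤ L/l + 2 := by
      have h1 : ((⌈L/l⌉₊ : ℕ) : ℝ) < L/l + 1 := Nat.ceil_lt_add_one (by positivity)
      rw [hNdef]
      linarith
    -- final arithmetic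
    have e1 : ((N:ℕ):ℝ)+1 + (1-θ)⁻¹ ≤ (1/l + 2 + 1/(1-θ)) * (L+1) := by
      have hinv : 0 < (1-θ)⁻¹ := inv_pos.2 h1θ
      have h1l : 0 < 1/l := by positivity
      have hexp : (1/l + 2 + 1/(1-θ)) * (L+1)
          = (1/l)*L + 1/l + 2*L + 2 + (1/(1-θ))*L + (1-θ)⁻¹ := by
        rw [one_div (1-θ)]
        ring
      rw [hexp]
      have hLl : L/l = (1/l)*L := by ring
      rw [hLl] at hNle
      nlinarith [mul_nonneg h1l.le hL0, mul_nonneg hinv.le hL0]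
    have hCqne : Cq ≠ 0 := hCq0.ne'
    have h1θne : (1:ℝ) - θ ≠ 0 := h1θ.ne'
    calc ‖T v‖ = ‖T (g N) + T (fun s => v s - g N s)‖ := by
          conv_lhs => rw [hsplit, map_add]
      _ ≤ ‖T (g N)‖ + ‖T (fun s => v s - g N s)‖ := norm_add_le _ _
      _ ≤ Cp * (((N:ℝ)+1) * (12*V)) + Cq * (12 * V * θ^(N+1) * (1-θ)⁻¹) :=
          add_le_add hbound1 hbound2
      _ ≤ Cp * (((N:ℝ)+1) * (12*V)) + Cq * (12 * V * (Cp/Cq) * (1-θ)⁻¹) := by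
          refine add_le_add_right ?_ _
          refine mul_le_mul_of_nonneg_left ?_ hCq0.le
          refine mul_le_mul_of_nonneg_right ?_ (inv_nonneg.2 h1θ.le)
          exact mul_le_mul_of_nonneg_left hθN (by positivity)
      _ = 12*V*Cp*((((N:ℕ):ℝ)+1) + (1-θ)⁻¹) := by
          field_simp
      _ ≤ 12*V*Cp*((1/l + 2 + 1/(1-θ)) * (L+1)) :=
          mul_le_mul_of_nonneg_left e1 (by positivity)
      _ = 12 * (1/l + 2 + 1/(1-θ)) * Cp * (L + 1) * V := by ring


end
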